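/- arXiv:2102.07253 — 5 statements merged into one kernel-verified Lean document; each statement's English description precedes it below -/
import Mathlib

section
/- The star K_{1,m} with m ≥ 1 edges has modularity 0. -/
open Finset
open scoped Classical

noncomputable section

/-- Number of edges of `G` with both endpoints in `A` (as a real number). -/
def edgesInside {V : Type*} [Fintype V] (G : SimpleGraph V) (A : Finset V) : ℝ :=
  (((A ×ˢ A).filter fun p => G.Adj p.1 p.2).card : ℝ) / 2

/-- Sum of degrees of vertices of `A`. -/
def degSum {V : Type*} [Fintype V] (G : SimpleGraph V) (A : Finset V) : ℕ :=
  ∑ v ∈ A, G.degree v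

/-- Number of edges of `G`. -/
def numEdges {V : Type*} [Fintype V] (G : SimpleGraph V) : ℕ :=
  G.edgeFinset.card

/-- Modularity score of a vertex partition. -/
def modScore {V : Type*} [Fintype V] [DecidableEq V] (G : SimpleGraph V)
    (P : Finpartition (univ : Finset V)) : ℝ :=
  ∑ A ∈ P.parts, (edgesInside G A / (numEdges G : ℝ)
    - ((degSum G A : ℝ) / (2 * (numEdges G : ℝ))) ^ 2)

/-- Modularity of a graph: supremum of modularity scores over all vertex partitions. -/
def modularity {V : Type*} [Fintype V] [DecidableEq V] (G : SimpleGraph V) : ℝ :=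
  sSup {x : ℝ | ∃ P : Finpartition (univ : Finset V), x = modScore G P}

/-- The star `K_{1,m}`: one center adjacent to `m` leaves. -/
def starGraph (m : ℕ) : SimpleGraph (Option (Fin m)) :=
  SimpleGraph.fromRel fun a b => a = none ∧ b ≠ none

/-! A part holding the center and `k` leaves spans `k` edges and has degree sum `m + k`, so it
contributes `k/m - ((m + k)/2m)^2 = -((m - k)/2m)^2 ≤ 0`; a part of leaves alone spans no edge and
contributes `-(k/2m)^2`. Hence no partition scores above `0`, while the one-part partition of any
graph scores `|E|/|E| - (2|E|/2|E|)^2 = 0`. -/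

section Modularity

variable {V : Type*} [Fintype V] (G : SimpleGraph V)

lemma edgesInside_univ : edgesInside G univ = numEdges G := by
  have hdarts : (univ ×ˢ univ : Finset (V × V)).filter (fun p => G.Adj p.1 p.2) =
      (univ : Finset G.Dart).map ⟨_, SimpleGraph.Dart.toProd_injective⟩ := by
    ext ⟨a, b⟩
    simp only [mem_filter, mem_product, mem_univ, true_and, mem_map, Function.Embedding.coeFn_mk]
    exact ⟨fun h => ⟨⟨(a, b), h⟩, rfl⟩, by rintro ⟨⟨p, hp⟩, rfl⟩; exact hp⟩
  rw [edgesInside, hdarts, card_map, card_univ, G.dart_card_eq_twice_card_edges, numEdges]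
  push_cast
  ring

lemma degSum_univ : degSum G univ = 2 * numEdges G :=
  G.sum_degrees_eq_twice_card_edges

variable [DecidableEq V]

lemma modScore_indiscrete (h : (univ : Finset V) ≠ ⊥) :
    modScore G (Finpartition.indiscrete h) = 0 := by
  rw [modScore, Finpartition.indiscrete_parts, sum_singleton, edgesInside_univ, degSum_univ]
  rcases eq_or_ne (numEdges G : ℝ) 0 with h0 | h0
  · simp [h0]
  · push_cast
    field_simp
    ring

lemma modularity_eq_zero_of_forall_modScore_nonpos [Nonempty V]
    (h : ∀ P : Finpartition (univ : Finset V), modScore G P ≤ 0) : modularity G = 0 := by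
  have hbdd : ∀ x ∈ {x : ℝ | ∃ P : Finpartition (univ : Finset V), x = modScore G P}, x ≤ 0 := by
    rintro _ ⟨P, rfl⟩
    exact h P
  have huniv : (univ : Finset V) ≠ ⊥ := univ_nonempty.ne_empty
  refine le_antisymm (Real.sSup_le hbdd le_rfl) (le_csSup ⟨0, hbdd⟩ ?_)
  exact ⟨Finpartition.indiscrete huniv, (modScore_indiscrete G huniv).symm⟩

end Modularity

lemma div_le_sq_add_div_two_mul (a b : ℝ) : b / a ≤ ((b + a) / (2 * a)) ^ 2 := by
  rcases eq_or_ne a 0 with rfl | ha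
  · simp
  have hgap : ((b + a) / (2 * a)) ^ 2 - b / a = ((b - a) / (2 * a)) ^ 2 := by
    field_simp
    ring
  linarith [sq_nonneg ((b - a) / (2 * a))]

section Star

variable (m : ℕ)

lemma starGraph_adj (a b : Option (Fin m)) :
    (starGraph m).Adj a b ↔ (a = none ∧ b ≠ none) ∨ (b = none ∧ a ≠ none) := by
  simp only [starGraph, SimpleGraph.fromRel_adj, and_iff_right_iff_imp]
  rintro (⟨rfl, hb⟩ | ⟨rfl, ha⟩)
  exacts [Ne.symm hb, ha]

lemma starGraph_degree_none : (starGraph m).degree none = m := by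
  have : (starGraph m).neighborFinset none = univ.erase none := by
    ext u
    simp [starGraph_adj]
  rw [← SimpleGraph.card_neighborFinset_eq_degree, this, card_erase_of_mem (mem_univ _)]
  simp

lemma starGraph_degree_some (i : Fin m) : (starGraph m).degree (some i) = 1 := by
  have : (starGraph m).neighborFinset (some i) = {none} := by
    ext u
    simp [starGraph_adj]
  rw [← SimpleGraph.card_neighborFinset_eq_degree, this, card_singleton]

lemma starGraph_degSum (A : Finset (Option (Fin m))) :
    degSum (starGraph m) A = #(A.erase none) + if none ∈ A then m else 0 := by
  have hleaves : ∑ v ∈ A.erase none, (starGraph m).degree v = #(A.erase none) := by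
    rw [card_eq_sum_ones]
    refine sum_congr rfl fun v hv => ?_
    obtain ⟨i, rfl⟩ := Option.ne_none_iff_exists'.mp (ne_of_mem_erase hv)
    exact starGraph_degree_some m i
  by_cases h : none ∈ A
  · rw [degSum, ← add_sum_erase A _ h, hleaves, if_pos h, starGraph_degree_none, add_comm]
  · rw [degSum, if_neg h, add_zero, ← hleaves, erase_eq_of_notMem h]

lemma starGraph_numEdges : numEdges (starGraph m) = m := by
  have h := degSum_univ (starGraph m)
  rw [starGraph_degSum, card_erase_of_mem (mem_univ _), if_pos (mem_univ _)] at h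
  simp only [card_univ, Fintype.card_option, Fintype.card_fin, add_tsub_cancel_right] at h
  omega

lemma starGraph_edgesInside (A : Finset (Option (Fin m))) :
    edgesInside (starGraph m) A = if none ∈ A then (#(A.erase none) : ℝ) else 0 := by
  split_ifs with h
  · have hpairs : (A ×ˢ A).filter (fun p => (starGraph m).Adj p.1 p.2) =
        ({none} ×ˢ A.erase none).disjUnion (A.erase none ×ˢ {none}) (by
          simp only [disjoint_left, mem_product, mem_singleton, mem_erase]
          rintro _ ⟨h1, -⟩ ⟨⟨h2, -⟩, -⟩
          exact h2 h1) := by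
      ext ⟨a, b⟩
      simp only [mem_filter, mem_product, mem_disjUnion, mem_erase, mem_singleton, starGraph_adj]
      constructor
      · rintro ⟨⟨ha, hb⟩, ⟨rfl, hb'⟩ | ⟨rfl, ha'⟩⟩
        exacts [Or.inl ⟨rfl, hb', hb⟩, Or.inr ⟨⟨ha', ha⟩, rfl⟩]
      · rintro (⟨rfl, hb', hb⟩ | ⟨⟨ha', ha⟩, rfl⟩)
        exacts [⟨⟨h, hb⟩, Or.inl ⟨rfl, hb'⟩⟩, ⟨⟨ha, h⟩, Or.inr ⟨rfl, ha'⟩⟩]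
    rw [edgesInside, hpairs, card_disjUnion, card_product, card_product, card_singleton]
    push_cast
    ring
  · have hpairs : (A ×ˢ A).filter (fun p => (starGraph m).Adj p.1 p.2) = ∅ := by
      refine filter_false_of_mem fun ⟨a, b⟩ hab => ?_
      rw [mem_product] at hab
      rw [starGraph_adj]
      rintro (⟨rfl, -⟩ | ⟨rfl, -⟩)
      exacts [h hab.1, h hab.2]
    rw [edgesInside, hpairs, card_empty, Nat.cast_zero, zero_div]

lemma starGraph_part_nonpos (A : Finset (Option (Fin m))) :
    edgesInside (starGraph m) A / (numEdges (starGraph m) : ℝ)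
      - ((degSum (starGraph m) A : ℝ) / (2 * (numEdges (starGraph m) : ℝ))) ^ 2 ≤ 0 := by
  rw [starGraph_edgesInside, starGraph_degSum, starGraph_numEdges, sub_nonpos]
  split_ifs
  · push_cast
    exact div_le_sq_add_div_two_mul _ _
  · rw [zero_div]
    positivity

end Star

theorem modularity_star_general (m : ℕ) :
    modularity (starGraph m) = 0 :=
  modularity_eq_zero_of_forall_modScore_nonpos _ fun _ =>
    sum_nonpos fun A _ => starGraph_part_nonpos m A

/-- The star `K_{1,m}` with `m ≥ 1` edges has modularity `0`. -/
theorem modularity_star (m : ℕ) (hm : 1 ≤ m) :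
    modularity (starGraph m) = 0 :=
  modularity_star_general m

end
end

section
/- If a class of graphs 𝒞 is maximally modular, then the maximum degree of graphs in 𝒞 is sublinear in the number of edges: for every c > 0 there exists M such that any G ∈ 𝒞 with m ≥ M edges has Δ(G) < c·m. -/
open Finset
open scoped Classical

noncomputable section

/-!
Let `v` be a vertex of maximum degree `Δ`. In every partition the part containing `v` has degree
sum at least `Δ`, so the degree tax `∑ (deg A / 2m)²` is at least `(Δ / 2m)²`, while the edge term
`∑ e(A) / m` is at most `1`. Hence `mod G ≤ 1 - (Δ / 2m)²`, and `mod G > 1 - c² / 4` forces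
`Δ < c m`.
-/

section Modularity

variable {V : Type*} [Fintype V] (G : SimpleGraph V)

lemma card_filter_adj_le_degSum (A : Finset V) :
    #((A ×ˢ A).filter fun p => G.Adj p.1 p.2) ≤ degSum G A := by
  rw [card_filter, sum_product, degSum]
  gcongr with u
  calc ∑ w ∈ A, (if G.Adj u w then 1 else 0)
      ≤ ∑ w, (if G.Adj u w then 1 else 0) := sum_le_univ_sum_of_nonneg fun _ => Nat.zero_le _
    _ = G.degree u := by
      rw [← G.card_neighborFinset_eq_degree, G.neighborFinset_eq_filter, card_filter]

lemma edgesInside_le_half_degSum (A : Finset V) : edgesInside G A ≤ degSum G A / 2 := by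
  rw [edgesInside]
  gcongr
  exact_mod_cast card_filter_adj_le_degSum G A

lemma degree_le_degSum {A : Finset V} {v : V} (hv : v ∈ A) : G.degree v ≤ degSum G A :=
  single_le_sum (f := fun u => G.degree u) (fun _ _ => Nat.zero_le _) hv

variable [DecidableEq V]

lemma sum_degSum_parts (P : Finpartition (univ : Finset V)) :
    ∑ A ∈ P.parts, degSum G A = 2 * numEdges G :=
  calc ∑ A ∈ P.parts, degSum G A = ∑ v ∈ P.parts.biUnion id, G.degree v :=
        (sum_biUnion P.supIndep.pairwiseDisjoint).symm
    _ = ∑ v, G.degree v := by rw [P.biUnion_parts]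
    _ = 2 * numEdges G := G.sum_degrees_eq_twice_card_edges

lemma sum_edgesInside_le_numEdges (P : Finpartition (univ : Finset V)) :
    ∑ A ∈ P.parts, edgesInside G A ≤ numEdges G :=
  calc ∑ A ∈ P.parts, edgesInside G A
      ≤ ∑ A ∈ P.parts, (degSum G A : ℝ) / 2 := sum_le_sum fun A _ => edgesInside_le_half_degSum G A
    _ = numEdges G := by
      rw [← sum_div, ← Nat.cast_sum, sum_degSum_parts]
      push_cast
      ring

lemma modScore_le_one_sub_sq_degree (P : Finpartition (univ : Finset V)) (v : V) :
    modScore G P ≤ 1 - ((G.degree v : ℝ) / (2 * numEdges G)) ^ 2 := by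
  obtain ⟨A, hA, hvA⟩ := P.exists_mem (mem_univ v)
  have edge_term : ∑ A ∈ P.parts, edgesInside G A / numEdges G ≤ 1 := by
    rw [← sum_div]
    exact div_le_one_of_le₀ (sum_edgesInside_le_numEdges G P) (Nat.cast_nonneg _)
  have degree_tax : ((G.degree v : ℝ) / (2 * numEdges G)) ^ 2
      ≤ ∑ A ∈ P.parts, ((degSum G A : ℝ) / (2 * numEdges G)) ^ 2 :=
    calc ((G.degree v : ℝ) / (2 * numEdges G)) ^ 2
        ≤ ((degSum G A : ℝ) / (2 * numEdges G)) ^ 2 := by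
          gcongr
          exact_mod_cast degree_le_degSum G hvA
      _ ≤ ∑ A ∈ P.parts, ((degSum G A : ℝ) / (2 * numEdges G)) ^ 2 :=
          single_le_sum (f := fun A => ((degSum G A : ℝ) / (2 * numEdges G)) ^ 2)
            (fun _ _ => sq_nonneg _) hA
  rw [modScore, sum_sub_distrib]
  linarith

lemma modularity_le_one_sub_sq_maxDegree [Nonempty V] :
    modularity G ≤ 1 - ((G.maxDegree : ℝ) / (2 * numEdges G)) ^ 2 := by
  obtain ⟨v, hv⟩ := G.exists_maximal_degree_vertex
  rw [hv]
  refine csSup_le ⟨_, ⊥, rfl⟩ ?_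
  rintro _ ⟨P, rfl⟩
  exact modScore_le_one_sub_sq_degree G P v

end Modularity

/-- A maximally modular class of graphs has maximum degree sublinear in the number of edges. -/
theorem maximallyModular_sublinear_maxDegree
    (𝒞 : ∀ n : ℕ, SimpleGraph (Fin n) → Prop)
    (hmax : ∀ ε : ℝ, 0 < ε → ∃ M : ℕ, ∀ (n : ℕ) (G : SimpleGraph (Fin n)),
      𝒞 n G → M ≤ numEdges G → 1 - ε < modularity G) :
    ∀ c : ℝ, 0 < c → ∃ M : ℕ, ∀ (n : ℕ) (G : SimpleGraph (Fin n)),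
      𝒞 n G → M ≤ numEdges G → (G.maxDegree : ℝ) < c * numEdges G := by
  intro c hc
  obtain ⟨M, hM⟩ := hmax (c ^ 2 / 4) (by positivity)
  refine ⟨max M 1, fun n G hG hm => ?_⟩
  have hm_pos : (0 : ℝ) < numEdges G := by exact_mod_cast (le_max_right M 1).trans hm
  have : Nonempty (Fin n) := by
    obtain ⟨e, -⟩ := card_pos.mp (show 0 < numEdges G by exact_mod_cast hm_pos)
    exact e.inductionOn fun v _ => ⟨v⟩
  have hmod_lower := hM n G hG ((le_max_left M 1).trans hm)
  have hmod_upper := modularity_le_one_sub_sq_maxDegree G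
  by_contra! hΔ
  have : c / 2 ≤ (G.maxDegree : ℝ) / (2 * numEdges G) := by
    rw [le_div_iff₀ (by positivity)]
    linarith
  nlinarith

end
end

section
/- (Cheeger's inequality, lower direction) Let G be a finite graph without isolated vertices and λ₂ the second smallest eigenvalue of its normalized Laplacian. Then for every nonempty proper subset S ⊊ V, |E(S, V∖S)| ≥ (λ₂/2) · min{deg(S), deg(V∖S)}. -/
open Finset
open scoped Classical

noncomputable section

/-- Normalized Laplacian `D^{-1/2} (D - A) D^{-1/2}` of a graph. -/
def normalizedLaplacian {V : Type*} [Fintype V] (G : SimpleGraph V) : Matrix V V ℝ :=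
  Matrix.of fun u v =>
    G.lapMatrix ℝ u v / (Real.sqrt (G.degree u) * Real.sqrt (G.degree v))

/-- The second smallest value (with multiplicity) of a function on a fintype. -/
def secondSmallest {n : Type*} [Fintype n] (f : n → ℝ) : ℝ :=
  ((Finset.univ.val.map f).sort (· ≤ ·)).getD 1 0

/-- The smallest value (with multiplicity) of a function on a fintype. -/
def smallestVal {n : Type*} [Fintype n] (f : n → ℝ) : ℝ :=
  ((Finset.univ.val.map f).sort (· ≤ ·)).getD 0 0

/-- Number of edges of `G` between `S` and its complement. -/
def cutEdges {V : Type*} [Fintype V] [DecidableEq V] (G : SimpleGraph V) (S : Finset V) : ℕ :=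
  ((S ×ˢ Sᶜ).filter fun p => G.Adj p.1 p.2).card


open Finset
open scoped Classical

noncomputable section

/-!
Courant–Fischer: `ℒ = D^{-1/2} L D^{-1/2}` is positive semidefinite with `ℒ (D^{1/2} 𝟙) = 0`, so
`λ₂ ‖x‖² ≤ ⟪x, ℒ x⟫` whenever `x ⊥ D^{1/2} 𝟙`. Test this with `x = D^{1/2} f`, where `f` equals
`vol Sᶜ` on `S` and `-vol S` off `S`. Then `x ⊥ D^{1/2} 𝟙`, `‖x‖² = vol S · vol Sᶜ · vol V` and
`⟪x, ℒ x⟫ = ∑_{uv ∈ E} (f u - f v)² = (vol V)² |E(S, Sᶜ)|`, so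
`λ₂ · vol S · vol Sᶜ ≤ vol V · |E(S, Sᶜ)|` (with `vol T = degSum G T`); finally
`vol S · vol Sᶜ ≥ min (vol S) (vol Sᶜ) · vol V / 2`.
-/

open Matrix

theorem List.Pairwise.getD_zero_le_of_mem {α : Type*} [Preorder α] {l : List α}
    (hl : l.Pairwise (· ≤ ·)) {x : α} (hx : x ∈ l) (d : α) : l.getD 0 d ≤ x := by
  cases l with
  | nil => simp at hx
  | cons a l =>
    rcases List.mem_cons.mp hx with rfl | hx
    · exact le_rfl
    · exact List.rel_of_pairwise_cons hl hx

theorem exists_forall_ne_secondSmallest_le {n : Type*} [Fintype n] [Nonempty n] (f : n → ℝ) :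
    ∃ i₀, ∀ i ≠ i₀, secondSmallest f ≤ f i := by
  obtain ⟨i₀, hmin⟩ := Finite.exists_min f
  refine ⟨i₀, fun i hi => ?_⟩
  set s := (univ.val.erase i₀).map f
  have hmap : univ.val.map f = f i₀ ::ₘ s := by
    rw [← Multiset.map_cons, Multiset.cons_erase (mem_univ i₀)]
  have hsort : (univ.val.map f).sort (· ≤ ·) = f i₀ :: s.sort (· ≤ ·) := by
    rw [hmap, Multiset.sort_cons]
    simp only [s, Multiset.mem_map]
    rintro _ ⟨j, -, rfl⟩
    exact hmin j
  have hmem : f i ∈ s.sort (· ≤ ·) := by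
    rw [Multiset.mem_sort]
    exact Multiset.mem_map_of_mem f ((Multiset.mem_erase_of_ne hi).mpr (mem_univ i))
  rw [secondSmallest, hsort]
  exact (Multiset.pairwise_sort _ _).getD_zero_le_of_mem hmem 0

namespace Matrix.IsHermitian

variable {n : Type*} [Fintype n] [DecidableEq n] {M : Matrix n n ℝ} (hM : M.IsHermitian)

/-- Coordinates of `x` in the orthonormal eigenvector basis of `M`. -/
def eigenCoords (x : n → ℝ) : n → ℝ :=
  x ᵥ* (hM.eigenvectorUnitary : Matrix n n ℝ)

theorem eigenCoords_apply (x : n → ℝ) (i : n) :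
    hM.eigenCoords x i = x ⬝ᵥ ⇑(hM.eigenvectorBasis i) := by
  simp [eigenCoords, vecMul, dotProduct]

theorem eigenvectorUnitary_mulVec_eigenCoords (x : n → ℝ) :
    (hM.eigenvectorUnitary : Matrix n n ℝ) *ᵥ hM.eigenCoords x = x := by
  rw [eigenCoords, ← mulVec_transpose, mulVec_mulVec, ← conjTranspose_eq_transpose_of_trivial,
    ← star_eq_conjTranspose, mem_unitaryGroup_iff.mp hM.eigenvectorUnitary.2, one_mulVec]

theorem eigenCoords_dotProduct_eigenCoords (x y : n → ℝ) :
    hM.eigenCoords x ⬝ᵥ hM.eigenCoords y = x ⬝ᵥ y := by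
  rw [eigenCoords, ← dotProduct_mulVec, eigenvectorUnitary_mulVec_eigenCoords]

theorem dotProduct_mulVec_eq_sum_eigenvalues (x : n → ℝ) :
    x ⬝ᵥ (M *ᵥ x) = ∑ i, hM.eigenvalues i * hM.eigenCoords x i ^ 2 := by
  have hM' : M = (hM.eigenvectorUnitary : Matrix n n ℝ) * diagonal hM.eigenvalues *
      (hM.eigenvectorUnitary : Matrix n n ℝ)ᵀ := by
    simpa [star_eq_conjTranspose, conjTranspose_eq_transpose_of_trivial] using hM.spectral_theorem
  conv_lhs => rw [hM', ← mulVec_mulVec, ← mulVec_mulVec, dotProduct_mulVec, mulVec_transpose]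
  simp only [dotProduct, mulVec_diagonal]
  exact sum_congr rfl fun i _ => by rw [eigenCoords]; ring

theorem eigenvalues_mul_eigenCoords_of_mulVec_eq_zero {w : n → ℝ} (hw : M *ᵥ w = 0) (i : n) :
    hM.eigenvalues i * hM.eigenCoords w i = 0 := by
  rw [eigenCoords_apply, ← smul_eq_mul, ← dotProduct_smul, ← mulVec_eigenvectorBasis,
    dotProduct_mulVec, ← mulVec_transpose, ← conjTranspose_eq_transpose_of_trivial, hM.eq, hw,
    zero_dotProduct]

/-- If `λ₂ > 0`, then all eigenvalues but one are positive, so the kernel of `M` is the line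
spanned by a single eigenvector; `x ⊥ w` kills the coordinate of `x` along it. -/
theorem secondSmallest_eigenvalues_mul_dotProduct_self_le (hPSD : M.PosSemidef) {w x : n → ℝ}
    (hw : w ≠ 0) (hMw : M *ᵥ w = 0) (hxw : x ⬝ᵥ w = 0) :
    secondSmallest hM.eigenvalues * (x ⬝ᵥ x) ≤ x ⬝ᵥ (M *ᵥ x) := by
  set μ := hM.eigenvalues
  set y := hM.eigenCoords x
  set z := hM.eigenCoords w with hzdef
  obtain ⟨j, -⟩ := Function.ne_iff.mp hw
  have : Nonempty n := ⟨j⟩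
  obtain ⟨i₀, hi₀⟩ := exists_forall_ne_secondSmallest_le μ
  rcases le_or_gt (secondSmallest μ) 0 with hnonpos | hpos
  · exact (mul_nonpos_of_nonpos_of_nonneg hnonpos (dotProduct_self_star_nonneg x)).trans
      (hPSD.dotProduct_mulVec_nonneg x)
  have hz : ∀ i ≠ i₀, z i = 0 := fun i hi =>
    (mul_eq_zero.mp (hM.eigenvalues_mul_eigenCoords_of_mulVec_eq_zero hMw i)).resolve_left
      (hpos.trans_le (hi₀ i hi)).ne'
  have hzi₀ : z i₀ ≠ 0 := by
    intro h
    have hz0 : z = 0 := funext fun i => by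
      rcases eq_or_ne i i₀ with rfl | hi
      exacts [h, hz i hi]
    rw [← hM.eigenvectorUnitary_mulVec_eigenCoords w, ← hzdef, hz0, mulVec_zero] at hw
    exact hw rfl
  have hyi₀ : y i₀ = 0 := by
    have hyz : y ⬝ᵥ z = y i₀ * z i₀ :=
      sum_eq_single i₀ (fun i _ hi => by rw [hz i hi, mul_zero]) (by simp)
    rw [eigenCoords_dotProduct_eigenCoords, hxw] at hyz
    exact (mul_eq_zero.mp hyz.symm).resolve_right hzi₀
  rw [hM.dotProduct_mulVec_eq_sum_eigenvalues, ← hM.eigenCoords_dotProduct_eigenCoords, dotProduct,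
    mul_sum]
  refine sum_le_sum fun i _ => ?_
  rcases eq_or_ne i i₀ with rfl | hi
  · simp [y, hyi₀]
  · rw [← sq]
    exact mul_le_mul_of_nonneg_right (hi₀ i hi) (sq_nonneg _)

end Matrix.IsHermitian

namespace SimpleGraph

variable {V : Type*} [Fintype V] (G : SimpleGraph V)

def sqrtDegree : V → ℝ := fun v => √(G.degree v)

/-- The double sum counts every edge twice, so this is `∑_{uv ∈ E} (f u - f v)²`. -/
def dirichletEnergy (f : V → ℝ) : ℝ :=
  (∑ i, ∑ j, if G.Adj i j then (f i - f j) ^ 2 else 0) / 2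

theorem normalizedLaplacian_eq_diagonal_mul_lapMatrix_mul_diagonal :
    normalizedLaplacian G =
      diagonal G.sqrtDegree⁻¹ * G.lapMatrix ℝ * diagonal G.sqrtDegree⁻¹ := by
  ext u v
  simp only [normalizedLaplacian, of_apply, mul_diagonal, diagonal_mul, Pi.inv_apply, sqrtDegree]
  rw [div_eq_mul_inv, mul_inv]
  ring

theorem posSemidef_normalizedLaplacian : (normalizedLaplacian G).PosSemidef := by
  rw [normalizedLaplacian_eq_diagonal_mul_lapMatrix_mul_diagonal]
  simpa using (G.posSemidef_lapMatrix ℝ).conjTranspose_mul_mul_same (diagonal G.sqrtDegree⁻¹)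

theorem sqrtDegree_mul_dotProduct_sqrtDegree_mul (f g : V → ℝ) :
    (G.sqrtDegree * f) ⬝ᵥ (G.sqrtDegree * g) = ∑ v, (G.degree v : ℝ) * (f v * g v) := by
  refine sum_congr rfl fun v _ => ?_
  simp only [Pi.mul_apply, sqrtDegree]
  linear_combination (f v * g v) * Real.mul_self_sqrt (Nat.cast_nonneg (α := ℝ) (G.degree v))

variable {G}

theorem sqrtDegree_pos (hdeg : ∀ v, 0 < G.degree v) (v : V) : 0 < G.sqrtDegree v :=
  Real.sqrt_pos.mpr (Nat.cast_pos.mpr (hdeg v))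

theorem diagonal_inv_sqrtDegree_mulVec_sqrtDegree_mul (hdeg : ∀ v, 0 < G.degree v) (f : V → ℝ) :
    diagonal G.sqrtDegree⁻¹ *ᵥ (G.sqrtDegree * f) = f := by
  ext v
  simp [mulVec_diagonal, inv_mul_cancel_left₀ (sqrtDegree_pos hdeg v).ne']

theorem normalizedLaplacian_mulVec_sqrtDegree (hdeg : ∀ v, 0 < G.degree v) :
    normalizedLaplacian G *ᵥ G.sqrtDegree = 0 := by
  have h := diagonal_inv_sqrtDegree_mulVec_sqrtDegree_mul hdeg 1
  rw [mul_one] at h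
  rw [normalizedLaplacian_eq_diagonal_mul_lapMatrix_mul_diagonal, ← mulVec_mulVec, h,
    ← mulVec_mulVec, Pi.one_def, lapMatrix_mulVec_const_eq_zero, mulVec_zero]

theorem sqrtDegree_mul_dotProduct_normalizedLaplacian_mulVec (hdeg : ∀ v, 0 < G.degree v)
    (f : V → ℝ) :
    (G.sqrtDegree * f) ⬝ᵥ (normalizedLaplacian G *ᵥ (G.sqrtDegree * f)) =
      G.dirichletEnergy f := by
  rw [normalizedLaplacian_eq_diagonal_mul_lapMatrix_mul_diagonal, ← mulVec_mulVec,
    diagonal_inv_sqrtDegree_mulVec_sqrtDegree_mul hdeg, ← mulVec_mulVec, dotProduct_mulVec,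
    ← diagonal_transpose, vecMul_transpose, diagonal_inv_sqrtDegree_mulVec_sqrtDegree_mul hdeg,
    ← toLinearMap₂'_apply', lapMatrix_toLinearMap₂', dirichletEnergy]

variable (G) [DecidableEq V] (S : Finset V)

theorem sqrtDegree_mul_piecewise_dotProduct (a b c d : ℝ) :
    (G.sqrtDegree * S.piecewise (fun _ => a) (fun _ => b)) ⬝ᵥ
        (G.sqrtDegree * S.piecewise (fun _ => c) (fun _ => d)) =
      a * c * degSum G S + b * d * degSum G Sᶜ := by
  rw [sqrtDegree_mul_dotProduct_sqrtDegree_mul, ← sum_add_sum_compl S, degSum, degSum]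
  push_cast
  rw [mul_sum, mul_sum]
  congr 1 <;> refine sum_congr rfl fun v hv => ?_
  · rw [piecewise_eq_of_mem _ _ _ hv, piecewise_eq_of_mem _ _ _ hv]
    ring
  · rw [piecewise_eq_of_notMem _ _ _ (mem_compl.mp hv),
      piecewise_eq_of_notMem _ _ _ (mem_compl.mp hv)]
    ring

theorem cutEdges_compl : cutEdges G Sᶜ = cutEdges G S := by
  rw [cutEdges, cutEdges, compl_compl]
  refine card_nbij' Prod.swap Prod.swap ?_ ?_ (fun _ _ => rfl) (fun _ _ => rfl) <;>
  · intro p hp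
    simp only [coe_filter, mem_product, Set.mem_ofPred_eq] at hp ⊢
    exact ⟨hp.1.symm, hp.2.symm⟩

theorem sum_sum_compl_ite_adj (c : ℝ) :
    ∑ i ∈ S, ∑ j ∈ Sᶜ, (if G.Adj i j then c else 0) = c * cutEdges G S := by
  rw [← sum_product', ← sum_filter, sum_const, nsmul_eq_mul, mul_comm, cutEdges]

theorem dirichletEnergy_piecewise (a b : ℝ) :
    G.dirichletEnergy (S.piecewise (fun _ => a) (fun _ => b)) = (a - b) ^ 2 * cutEdges G S := by
  set f := S.piecewise (fun _ => a) (fun _ => b)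
  have hin : ∀ i ∈ S, f i = a := fun i hi => S.piecewise_eq_of_mem _ _ hi
  have hout : ∀ i ∈ Sᶜ, f i = b := fun i hi => S.piecewise_eq_of_notMem _ _ (mem_compl.mp hi)
  have block : ∀ (A B : Finset V) (c d : ℝ), (∀ i ∈ A, f i = c) → (∀ j ∈ B, f j = d) →
      ∑ i ∈ A, ∑ j ∈ B, (if G.Adj i j then (f i - f j) ^ 2 else 0) =
        ∑ i ∈ A, ∑ j ∈ B, (if G.Adj i j then (c - d) ^ 2 else 0) :=
    fun A B c d hA hB => sum_congr rfl fun i hi => sum_congr rfl fun j hj => by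
      rw [hA i hi, hB j hj]
  have hsplit : ∀ h : V → ℝ, ∑ v, h v = ∑ v ∈ S, h v + ∑ v ∈ Sᶜ, h v :=
    fun h => (sum_add_sum_compl S h).symm
  have hback := sum_sum_compl_ite_adj G Sᶜ ((b - a) ^ 2)
  rw [compl_compl, cutEdges_compl] at hback
  rw [dirichletEnergy, hsplit]
  simp only [hsplit (fun j => if G.Adj _ j then _ else 0), sum_add_distrib]
  rw [block S S a a hin hin, block S Sᶜ a b hin hout, block Sᶜ S b a hout hin,
    block Sᶜ Sᶜ b b hout hout, sum_sum_compl_ite_adj, hback]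
  simp only [sub_self, ne_eq, OfNat.ofNat_ne_zero, not_false_eq_true, zero_pow, ite_self,
    sum_const_zero]
  ring

end SimpleGraph

theorem div_two_mul_min_le_of_mul_le {l c p q : ℝ} (hp : 0 < p) (hq : 0 < q) (hc : 0 ≤ c)
    (h : l * (p * q * (p + q)) ≤ (p + q) ^ 2 * c) : l / 2 * min p q ≤ c := by
  have h' : l * (p * q) ≤ (p + q) * c := by
    refine le_of_mul_le_mul_right ?_ (add_pos hp hq)
    linarith
  rcases le_total p q with hpq | hpq
  · rw [min_eq_left hpq]
    nlinarith
  · rw [min_eq_right hpq]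
    nlinarith

open SimpleGraph in
theorem cheeger_lower_general {V : Type*} [Fintype V] [DecidableEq V]
    (G : SimpleGraph V) (hdeg : ∀ v : V, 0 < G.degree v)
    (hH : (normalizedLaplacian G).IsHermitian) :
    ∀ S : Finset V, S.Nonempty → S ≠ univ →
      (secondSmallest hH.eigenvalues / 2) *
        min (degSum G S : ℝ) (degSum G Sᶜ : ℝ) ≤ (cutEdges G S : ℝ) := by
  intro S hS hSu
  have hSc : Sᶜ.Nonempty := (compl_ne_univ_iff_nonempty Sᶜ).mp (by rwa [compl_compl])
  have hvol : ∀ T : Finset V, T.Nonempty → 0 < (degSum G T : ℝ) := fun T hT =>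
    Nat.cast_pos.mpr (sum_pos (fun v _ => hdeg v) hT)
  set p := (degSum G S : ℝ)
  set q := (degSum G Sᶜ : ℝ)
  set f := S.piecewise (fun _ => q) (fun _ => -p)
  have hxs : (G.sqrtDegree * f) ⬝ᵥ G.sqrtDegree = 0 := by
    have h := G.sqrtDegree_mul_piecewise_dotProduct S q (-p) 1 1
    simp only [piecewise_same, ← Pi.one_def, mul_one] at h
    linarith
  have hsqrt_ne : G.sqrtDegree ≠ 0 := fun h => (sqrtDegree_pos hdeg hS.choose).ne' (congrFun h _)
  have hrayleigh := hH.secondSmallest_eigenvalues_mul_dotProduct_self_le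
    (posSemidef_normalizedLaplacian G) hsqrt_ne (normalizedLaplacian_mulVec_sqrtDegree hdeg) hxs
  rw [sqrtDegree_mul_piecewise_dotProduct, sqrtDegree_mul_dotProduct_normalizedLaplacian_mulVec hdeg,
    dirichletEnergy_piecewise] at hrayleigh
  refine div_two_mul_min_le_of_mul_le (hvol S hS) (hvol Sᶜ hSc) (Nat.cast_nonneg _) ?_
  convert hrayleigh using 1 <;> ring

/-- Cheeger's inequality, lower direction: for every nonempty proper `S ⊊ V`,
`|E(S, V∖S)| ≥ (λ₂/2) · min(deg S, deg (V∖S))`. -/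
theorem cheeger_lower {V : Type*} [Fintype V] [DecidableEq V] [Nonempty V]
    (G : SimpleGraph V) (hdeg : ∀ v : V, 0 < G.degree v)
    (hH : (normalizedLaplacian G).IsHermitian) :
    ∀ S : Finset V, S.Nonempty → S ≠ univ →
      (secondSmallest hH.eigenvalues / 2) *
        min (degSum G S : ℝ) (degSum G Sᶜ : ℝ) ≤ (cutEdges G S : ℝ) :=
  cheeger_lower_general G hdeg hH
end
end
end

section
/- For a finite graph G without isolated vertices, the second smallest eigenvalue of the normalized Laplacian is at most the second smallest eigenvalue of the (combinatorial) Laplacian: λ₂(ℒ) ≤ λ₂(L). -/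
/-!
Write `D^{1/2}` for the diagonal matrix of square roots of the degrees. Then
`D^{1/2} ℒ D^{1/2} = L`, so `⟪D^{1/2} z, ℒ (D^{1/2} z)⟫ = ⟪z, L z⟫`, and `‖z‖ ≤ ‖D^{1/2} z‖`
because every degree is at least one. Hence `D^{1/2}` maps the span of the eigenvectors of `L`
with eigenvalue at most `λ₂(L)`, a space of dimension at least two, onto a space of the same
dimension on which the Rayleigh quotient of `ℒ` is at most `λ₂(L)` (here `λ₂(L) ≥ 0` is used).
By the easy half of the Courant–Fischer principle, `λ₂(ℒ) ≤ λ₂(L)`.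
-/

open Finset
open scoped Classical

noncomputable section

namespace List

variable {α : Type*} [LinearOrder α] {l : List α}

theorem Pairwise.countP_lt_getElem_le (hl : l.Pairwise (· ≤ ·)) {k : ℕ} (hk : k < l.length) :
    l.countP (· < l[k]) ≤ k := by
  have hdrop : (l.drop k).countP (· < l[k]) = 0 := by
    refine countP_eq_zero.mpr fun x hx => ?_
    obtain ⟨m, hm, rfl⟩ := mem_iff_getElem.mp hx
    simpa [getElem_drop] using hl.rel_get_of_le (a := ⟨k, hk⟩)
      (b := ⟨k + m, by simp only [length_drop] at hm; omega⟩)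
      (Fin.mk_le_mk.mpr (Nat.le_add_right k m))
  have hsplit := countP_append (p := (· < l[k])) (l₁ := l.take k) (l₂ := l.drop k)
  rw [take_append_drop, hdrop] at hsplit
  simpa [hsplit] using (countP_le_length (l := l.take k)).trans (length_take_le k l)

theorem Pairwise.lt_countP_le_getElem (hl : l.Pairwise (· ≤ ·)) {k : ℕ} (hk : k < l.length) :
    k < l.countP (· ≤ l[k]) := by
  have htake : (l.take (k + 1)).countP (· ≤ l[k]) = k + 1 := by
    rw [countP_eq_length.mpr, length_take_of_le hk]
    intro x hx
    obtain ⟨m, hm, rfl⟩ := mem_iff_getElem.mp hx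
    simp only [length_take_of_le hk] at hm
    simpa [getElem_take] using hl.rel_get_of_le (a := ⟨m, by omega⟩) (b := ⟨k, hk⟩)
      (Fin.mk_le_mk.mpr (by omega))
  have hsplit := countP_append (p := (· ≤ l[k])) (l₁ := l.take (k + 1)) (l₂ := l.drop (k + 1))
  rw [take_append_drop, htake] at hsplit
  omega

end List

section SecondSmallest

variable {n : Type*} [Fintype n] (f : n → ℝ)

theorem card_filter_eq_countP_sort (p : ℝ → Prop) [DecidablePred p] :
    #{k | p (f k)} = ((univ.val.map f).sort (· ≤ ·)).countP (p ·) := by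
  rw [← Multiset.coe_countP, Multiset.sort_eq, Multiset.countP_map]
  rfl

theorem secondSmallest_eq_getElem (h : 1 < ((univ.val.map f).sort (· ≤ ·)).length) :
    secondSmallest f = ((univ.val.map f).sort (· ≤ ·))[1] := by
  simp [secondSmallest, List.getD_eq_getElem?_getD, List.getElem?_eq_getElem h]

theorem length_sort_map_univ : ((univ.val.map f).sort (· ≤ ·)).length = Fintype.card n := by
  simp [Multiset.length_sort]

theorem card_lt_secondSmallest_le_one : #{k | f k < secondSmallest f} ≤ 1 := by
  rcases le_or_gt (Fintype.card n) 1 with h | h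
  · exact (card_filter_le _ _).trans h
  · rw [← length_sort_map_univ f] at h
    rw [card_filter_eq_countP_sort f (· < secondSmallest f), secondSmallest_eq_getElem f h]
    exact (Multiset.pairwise_sort _ _).countP_lt_getElem_le h

theorem two_le_card_le_secondSmallest (h : 2 ≤ Fintype.card n) :
    2 ≤ #{k | f k ≤ secondSmallest f} := by
  rw [← length_sort_map_univ f] at h
  rw [card_filter_eq_countP_sort f (· ≤ secondSmallest f), secondSmallest_eq_getElem f h]
  exact (Multiset.pairwise_sort _ _).lt_countP_le_getElem h

theorem secondSmallest_eq_zero_of_card_le_one (h : Fintype.card n ≤ 1) : secondSmallest f = 0 := by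
  rw [← length_sort_map_univ f] at h
  simp [secondSmallest, List.getD_eq_getElem?_getD, List.getElem?_eq_none (by omega : _ ≤ 1)]

end SecondSmallest

open Module Submodule
open scoped RealInnerProductSpace

section Rayleigh

variable {ι E : Type*} [Fintype ι] [NormedAddCommGroup E] [InnerProductSpace ℝ E]
  (e : OrthonormalBasis ι ℝ E) {T : E →ₗ[ℝ] E} {μ : ι → ℝ} (he : ∀ i, T (e i) = μ i • e i)
include he

theorem OrthonormalBasis.inner_apply_eq_sum_mul_sq (w : E) :
    ⟪w, T w⟫ = ∑ i, μ i * ⟪e i, w⟫ ^ 2 := by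
  nth_rewrite 2 [← e.sum_repr' w]
  simp only [map_sum, map_smul, he, inner_sum, real_inner_smul_right, real_inner_comm w]
  exact sum_congr rfl fun i _ => by ring

theorem OrthonormalBasis.inner_apply_le_of_inner_eq_zero {c : ℝ} {w : E}
    (hw : ∀ i, c < μ i → ⟪e i, w⟫ = 0) : ⟪w, T w⟫ ≤ c * ‖w‖ ^ 2 := by
  rw [e.inner_apply_eq_sum_mul_sq he, ← e.sum_sq_inner_right w, mul_sum]
  refine sum_le_sum fun i _ => ?_
  by_cases hi : c < μ i
  · simp [hw i hi]
  · exact mul_le_mul_of_nonneg_right (not_lt.mp hi) (sq_nonneg _)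

theorem OrthonormalBasis.le_inner_apply_of_inner_eq_zero {c : ℝ} {w : E}
    (hw : ∀ i, μ i < c → ⟪e i, w⟫ = 0) : c * ‖w‖ ^ 2 ≤ ⟪w, T w⟫ := by
  rw [e.inner_apply_eq_sum_mul_sq he, ← e.sum_sq_inner_right w, mul_sum]
  refine sum_le_sum fun i _ => ?_
  by_cases hi : μ i < c
  · simp [hw i hi]
  · exact mul_le_mul_of_nonneg_right (not_lt.mp hi) (sq_nonneg _)

theorem OrthonormalBasis.exists_finrank_eq_inner_apply_le (c : ℝ) :
    ∃ W : Submodule ℝ E, finrank ℝ W = #{i | μ i ≤ c} ∧ ∀ w ∈ W, ⟪w, T w⟫ ≤ c * ‖w‖ ^ 2 := by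
  refine ⟨span ℝ (Set.range fun i : {i // μ i ≤ c} => e i), ?_,
    fun w hw => e.inner_apply_le_of_inner_eq_zero he fun i hi => ?_⟩
  · exact (finrank_span_eq_card
      (e.orthonormal.linearIndependent.comp _ Subtype.val_injective)).trans (Fintype.card_subtype _)
  · have hspan : span ℝ (Set.range fun i : {i // μ i ≤ c} => e i) ≤
        LinearMap.ker (innerSL ℝ (e i) : E →ₗ[ℝ] ℝ) := by
      refine span_le.mpr ?_
      rintro _ ⟨j, rfl⟩
      have hji : j.1 ≠ i := fun h => (h ▸ j.2).not_gt hi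
      simpa using e.orthonormal.2 hji.symm
    simpa using hspan hw

theorem OrthonormalBasis.secondSmallest_le_of_two_le_finrank {W : Submodule ℝ E}
    (hW : 2 ≤ finrank ℝ W) {c : ℝ} (hc : ∀ w ∈ W, ⟪w, T w⟫ ≤ c * ‖w‖ ^ 2) :
    secondSmallest μ ≤ c := by
  have : FiniteDimensional ℝ E := .of_basis e.toBasis
  by_contra! hlt
  -- a nonzero `w ∈ W` orthogonal to the at most one eigenvector below `secondSmallest μ`
  -- has Rayleigh quotient at least `secondSmallest μ`
  let B := {i // μ i < secondSmallest μ}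
  let f : W →ₗ[ℝ] B → ℝ := (LinearMap.pi fun i : B => (innerSL ℝ (e i) : E →ₗ[ℝ] ℝ)).comp W.subtype
  have hB : finrank ℝ (B → ℝ) < finrank ℝ W := by
    have := card_lt_secondSmallest_le_one μ
    rw [finrank_fintype_fun_eq_card, Fintype.card_subtype]
    exact this.trans_lt hW
  obtain ⟨⟨w, hwW⟩, hker, hw0⟩ :=
    exists_mem_ne_zero_of_ne_bot (LinearMap.ker_ne_bot_of_finrank_lt hB)
  have hperp : ∀ i, μ i < secondSmallest μ → ⟪e i, w⟫ = 0 := fun i hi =>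
    congr_fun (LinearMap.mem_ker.mp hker : f ⟨w, hwW⟩ = 0) ⟨i, hi⟩
  have hpos : 0 < ‖w‖ ^ 2 := by
    have : w ≠ 0 := fun h => hw0 (by simp [h])
    positivity
  have := (e.le_inner_apply_of_inner_eq_zero he hperp).trans (hc w hwW)
  linarith [mul_lt_mul_of_pos_right hlt hpos]

end Rayleigh

open Matrix

theorem Matrix.IsHermitian.toEuclideanLin_eigenvectorBasis {n : Type*} [Fintype n] [DecidableEq n]
    {M : Matrix n n ℝ} (hM : M.IsHermitian) (i : n) :
    toEuclideanLin M (hM.eigenvectorBasis i) = hM.eigenvalues i • hM.eigenvectorBasis i := by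
  ext1
  simp [toLpLin_apply, hM.mulVec_eigenvectorBasis]

theorem Matrix.IsHermitian.inner_toEuclideanLin_mul_mul_self {n : Type*} [Fintype n] [DecidableEq n]
    {P : Matrix n n ℝ} (hP : P.IsHermitian) (M : Matrix n n ℝ) (z : EuclideanSpace ℝ n) :
    ⟪toEuclideanLin P z, toEuclideanLin M (toEuclideanLin P z)⟫ =
      ⟪z, toEuclideanLin (P * M * P) z⟫ := by
  rw [toLpLin_mul_same, toLpLin_mul_same]
  exact isSymmetric_toEuclideanLin_iff.mpr hP _ _

theorem norm_le_norm_toEuclideanLin_diagonal {n : Type*} [Fintype n] [DecidableEq n] {s : n → ℝ}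
    (hs : ∀ i, 1 ≤ s i) (z : EuclideanSpace ℝ n) : ‖z‖ ≤ ‖toEuclideanLin (diagonal s) z‖ := by
  refine (sq_le_sq₀ (norm_nonneg _) (norm_nonneg _)).mp ?_
  simp only [EuclideanSpace.norm_sq_eq, toLpLin_apply, mulVec_diagonal, norm_mul, mul_pow]
  refine sum_le_sum fun i _ => le_mul_of_one_le_left (sq_nonneg _) (one_le_pow₀ ?_)
  exact (hs i).trans (le_abs_self _)

namespace SimpleGraph

variable {V : Type*} [Fintype V] [DecidableEq V] (G : SimpleGraph V)

def sqrtDegreeMatrix : Matrix V V ℝ := diagonal fun v => √(G.degree v)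

theorem sqrtDegreeMatrix_mul_normalizedLaplacian_mul (hdeg : ∀ v, 0 < G.degree v) :
    G.sqrtDegreeMatrix * normalizedLaplacian G * G.sqrtDegreeMatrix = G.lapMatrix ℝ := by
  ext u v
  have hu : √(G.degree u : ℝ) ≠ 0 := by positivity [hdeg u]
  have hv : √(G.degree v : ℝ) ≠ 0 := by positivity [hdeg v]
  simp only [sqrtDegreeMatrix, diagonal_mul, mul_diagonal, normalizedLaplacian, of_apply]
  field_simp
  -- `normalizedLaplacian` uses the classical `DecidableEq V` instance
  congr

theorem isHermitian_sqrtDegreeMatrix : G.sqrtDegreeMatrix.IsHermitian :=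
  isHermitian_diagonal _

theorem norm_le_norm_toEuclideanLin_sqrtDegreeMatrix (hdeg : ∀ v, 0 < G.degree v)
    (z : EuclideanSpace ℝ V) : ‖z‖ ≤ ‖toEuclideanLin G.sqrtDegreeMatrix z‖ :=
  norm_le_norm_toEuclideanLin_diagonal (fun v => Real.one_le_sqrt.mpr (by exact_mod_cast hdeg v)) z

end SimpleGraph

/-- For a graph without isolated vertices, `λ₂(ℒ) ≤ λ₂(L)`. -/
theorem secondSmallest_normalized_le_lap {V : Type*} [Fintype V] [DecidableEq V]
    (G : SimpleGraph V) (hdeg : ∀ v : V, 0 < G.degree v)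
    (hN : (normalizedLaplacian G).IsHermitian)
    (hL : (G.lapMatrix ℝ).IsHermitian) :
    secondSmallest hN.eigenvalues ≤ secondSmallest hL.eigenvalues := by
  rcases le_or_gt (Fintype.card V) 1 with hV | hV
  · simp only [secondSmallest_eq_zero_of_card_le_one _ hV, le_refl]
  set c := secondSmallest hL.eigenvalues
  obtain ⟨U, hUdim, hU⟩ :=
    hL.eigenvectorBasis.exists_finrank_eq_inner_apply_le hL.toEuclideanLin_eigenvectorBasis c
  have hcard := two_le_card_le_secondSmallest hL.eigenvalues hV
  have hc : 0 ≤ c := by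
    obtain ⟨i, hi⟩ := card_pos.mp (zero_lt_two.trans_le hcard)
    exact ((G.posSemidef_lapMatrix ℝ).eigenvalues_nonneg i).trans (mem_filter.mp hi).2
  set S := toEuclideanLin G.sqrtDegreeMatrix
  have hS : ∀ z, ‖z‖ ≤ ‖S z‖ := G.norm_le_norm_toEuclideanLin_sqrtDegreeMatrix hdeg
  have hSinj : Function.Injective S := (injective_iff_map_eq_zero S).mpr fun z hz =>
    norm_le_zero_iff.mp (by simpa [hz] using hS z)
  refine hN.eigenvectorBasis.secondSmallest_le_of_two_le_finrank hN.toEuclideanLin_eigenvectorBasis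
    (W := U.map S) ?_ ?_
  · rw [← (U.equivMapOfInjective S hSinj).finrank_eq, hUdim]
    exact hcard
  · rintro _ ⟨z, hz, rfl⟩
    rw [G.isHermitian_sqrtDegreeMatrix.inner_toEuclideanLin_mul_mul_self,
      G.sqrtDegreeMatrix_mul_normalizedLaplacian_mul hdeg]
    calc _ ≤ c * ‖z‖ ^ 2 := hU z hz
      _ ≤ c * ‖S z‖ ^ 2 := by gcongr; exact hS z


end
end

section
/- Let G be a graph with m ≥ 1 edges and ε > 0. Suppose D is a set of at most (ε/2)m edges such that every connected component A of G − D satisfies deg_G(V(A))/(2m) < ε/2 (equivalently, deg_G(V(A)) < ε·m). Then mod(G) > 1 − ε. -/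
open Finset
open scoped Classical

noncomputable section

section AuxLemmas
set_option linter.unusedSectionVars false


variable {V : Type*} [Fintype V] [DecidableEq V]

lemma card_filter_adj (H : SimpleGraph V) :
    ((univ ×ˢ univ : Finset (V × V)).filter fun p => H.Adj p.1 p.2).card
      = ∑ v, H.degree v := by
  rw [Finset.card_eq_sum_card_fiberwise (f := Prod.fst) (t := univ) (fun x _ => mem_univ _)]
  refine Finset.sum_congr rfl fun v _ => ?_
  rw [Finset.filter_filter]
  have : ((univ ×ˢ univ : Finset (V × V)).filter fun p => H.Adj p.1 p.2 ∧ p.1 = v)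
      = (H.neighborFinset v).map ⟨fun w => (v, w), fun a b h => by simpa using h⟩ := by
    ext ⟨a, b⟩
    simp only [mem_filter, mem_product, mem_univ, true_and, mem_map, SimpleGraph.mem_neighborFinset,
      Function.Embedding.coeFn_mk, Prod.mk.injEq]
    constructor
    · rintro ⟨h, rfl⟩; exact ⟨b, h, rfl⟩
    · rintro ⟨w, h, hw⟩; obtain ⟨rfl, rfl⟩ := Prod.mk.inj hw; simp [h]
  rw [this, Finset.card_map, SimpleGraph.card_neighborFinset_eq_degree]

/-- fiber of a connected component -/
def fib (H : SimpleGraph V) (c : H.ConnectedComponent) : Finset V :=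
  univ.filter fun v => H.connectedComponentMk v = c

lemma fib_nonempty (H : SimpleGraph V) (c : H.ConnectedComponent) : (fib H c).Nonempty := by
  obtain ⟨v, rfl⟩ := c.exists_rep
  exact ⟨v, mem_filter.mpr ⟨mem_univ v, rfl⟩⟩

lemma fib_injective (H : SimpleGraph V) : Function.Injective (fib H) := by
  intro c d h
  obtain ⟨v, hv⟩ := fib_nonempty H c
  have hv' : v ∈ fib H d := h ▸ hv
  simp only [fib, mem_filter] at hv hv'
  rw [← hv.2, ← hv'.2]

/-- the partition into connected components -/
def compPartition (H : SimpleGraph V) : Finpartition (univ : Finset V) where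
  parts := univ.image (fib H)
  supIndep := by
    rw [Finset.supIndep_iff_pairwiseDisjoint]
    rintro A hA B hB hne
    simp only [coe_image, coe_univ, Set.image_univ, Set.mem_range] at hA hB
    obtain ⟨c, rfl⟩ := hA
    obtain ⟨d, rfl⟩ := hB
    have hcd : c ≠ d := fun h => hne (by rw [h])
    simp only [Finset.disjoint_left, fib, mem_filter, Function.onFun, id]
    rintro v ⟨-, h1⟩ ⟨-, h2⟩
    exact hcd (h1 ▸ h2.symm ▸ rfl)
  sup_parts := by
    apply le_antisymm (fun v _ => mem_univ v)
    intro v _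
    rw [mem_sup]
    exact ⟨fib H (H.connectedComponentMk v), mem_image_of_mem _ (mem_univ _),
      mem_filter.mpr ⟨mem_univ v, rfl⟩⟩
  bot_notMem := by
    rw [bot_eq_empty]
    intro h
    obtain ⟨c, -, hc⟩ := mem_image.mp h
    exact (fib_nonempty H c).ne_empty hc

end AuxLemmas

/-- If `D` is a set of at most `(ε/2)m` edges such that every connected component of
`G − D` has total `G`-degree weight less than `ε/2`, then `mod(G) > 1 − ε`. -/
theorem modularity_of_small_separator {V : Type*} [Fintype V] [DecidableEq V]
    (G : SimpleGraph V) (ε : ℝ) (hε : 0 < ε) (hm : 1 ≤ numEdges G)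
    (D : Finset (Sym2 V)) (hD : ↑D ⊆ G.edgeSet)
    (hcard : (D.card : ℝ) ≤ (ε / 2) * numEdges G)
    (hcomp : ∀ c : (G.deleteEdges ↑D).ConnectedComponent,
      (∑ v ∈ univ.filter
          (fun v => (G.deleteEdges ↑D).connectedComponentMk v = c),
        (G.degree v : ℝ)) / (2 * (numEdges G : ℝ)) < ε / 2) :
    1 - ε < modularity G := by
  set G' := G.deleteEdges ↑D with hG'
  set m : ℝ := (numEdges G : ℝ) with hmdef
  have hm0 : (0:ℝ) < m := by
    rw [hmdef]
    have : (1:ℝ) ≤ (numEdges G : ℝ) := by exact_mod_cast hm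
    linarith
  set P := compPartition G' with hP
  have hparts : P.parts = univ.image (fib G') := by
    rw [hP]; unfold compPartition; convert rfl
  have hsum : ∀ f : Finset V → ℝ, ∑ A ∈ P.parts, f A = ∑ c, f (fib G' c) := by
    intro f
    rw [hparts, Finset.sum_image (fun c _ d _ h => fib_injective G' h)]
  have hdegsum : ∑ c, (degSum G (fib G' c) : ℝ) = 2 * m := by
    have : ∑ c, (degSum G (fib G' c)) = ∑ v, G.degree v := by
      simp only [degSum, fib]
      exact Finset.sum_fiberwise _ _ _
    rw [← Nat.cast_sum, this, SimpleGraph.sum_degrees_eq_twice_card_edges, hmdef]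
    simp only [numEdges]
    push_cast
    ring
  have hG'le : ∀ p : V × V, G'.Adj p.1 p.2 → G.Adj p.1 p.2 := by
    intro p h
    exact ((SimpleGraph.deleteEdges_adj).mp h).1
  have hDsub : D ⊆ G.edgeFinset := fun e he => by
    rw [SimpleGraph.mem_edgeFinset]; exact hD he
  have hDle : D.card ≤ numEdges G := Finset.card_le_card hDsub
  have key : ∀ a b : V, G'.Adj a b →
      G'.connectedComponentMk a = G'.connectedComponentMk b :=
    fun a b h => SimpleGraph.ConnectedComponent.sound h.reachable
  have hinside : (2:ℝ) * (m - D.card) ≤ ∑ c, (((fib G' c ×ˢ fib G' c).filter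
      fun p => G.Adj p.1 p.2).card : ℝ) := by
    have step1 : ∀ c, ((fib G' c ×ˢ fib G' c).filter fun p => G'.Adj p.1 p.2).card
        ≤ ((fib G' c ×ˢ fib G' c).filter fun p => G.Adj p.1 p.2).card := by
      intro c
      exact Finset.card_le_card (Finset.monotone_filter_right _ (fun p _ h => hG'le p h))
    have step2 : ∑ c, ((fib G' c ×ˢ fib G' c).filter fun p => G'.Adj p.1 p.2).card
        = ((univ ×ˢ univ : Finset (V × V)).filter fun p => G'.Adj p.1 p.2).card := by
      rw [Finset.card_eq_sum_card_fiberwise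
        (f := fun p => G'.connectedComponentMk p.1) (t := univ) (fun x _ => mem_univ _)]
      refine Finset.sum_congr rfl fun c _ => ?_
      congr 1
      rw [Finset.filter_filter]
      ext ⟨a, b⟩
      simp only [mem_filter, mem_product, mem_univ, true_and, fib]
      constructor
      · rintro ⟨⟨ha, hb⟩, hadj⟩
        exact ⟨hadj, ha⟩
      · rintro ⟨hadj, ha⟩
        exact ⟨⟨ha, (key a b hadj).symm.trans ha⟩, hadj⟩
    have step3 : ((univ ×ˢ univ : Finset (V × V)).filter fun p => G'.Adj p.1 p.2).card
        = 2 * G'.edgeFinset.card := by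
      rw [← SimpleGraph.sum_degrees_eq_twice_card_edges]
      convert card_filter_adj G'
    have step4 : G'.edgeFinset = G.edgeFinset \ D := by
      ext e
      simp [hG', SimpleGraph.edgeSet_deleteEdges, Set.mem_toFinset]
    have step5 : G'.edgeFinset.card = numEdges G - D.card := by
      rw [step4, Finset.card_sdiff_of_subset hDsub]; rfl
    calc (2:ℝ) * (m - D.card)
        = ((2 * (numEdges G - D.card) : ℕ) : ℝ) := by
          rw [hmdef]
          push_cast [Nat.cast_sub hDle]
          ring
      _ = ((∑ c, ((fib G' c ×ˢ fib G' c).filter fun p => G'.Adj p.1 p.2).card : ℕ) : ℝ) := by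
          rw [step2, step3, step5]
      _ ≤ _ := by
          push_cast
          exact Finset.sum_le_sum fun c _ => by exact_mod_cast step1 c
  set w : G'.ConnectedComponent → ℝ := fun c => (degSum G (fib G' c) : ℝ) / (2 * m) with hw
  have hwsum : ∑ c, w c = 1 := by
    rw [hw, ← Finset.sum_div, hdegsum]
    field_simp
  have hwnn : ∀ c, 0 ≤ w c := fun c => by
    rw [hw]
    positivity
  have hwlt : ∀ c, w c < ε / 2 := by
    intro c
    have := hcomp c
    rw [hw]
    convert this using 2
    simp [degSum, fib, Nat.cast_sum]
  have hsq : ∑ c, (w c) ^ 2 < ε / 2 := by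
    have hex : ∃ c, 0 < w c := by
      by_contra h
      push_neg at h
      have : ∑ c, w c ≤ 0 := Finset.sum_nonpos fun c _ => h c
      rw [hwsum] at this; linarith
    obtain ⟨c₀, hc₀⟩ := hex
    have hlt : ∑ c, (w c) ^ 2 < ∑ c, (ε / 2) * w c := by
      apply Finset.sum_lt_sum
      · intro c _
        nlinarith [hwnn c, hwlt c]
      · exact ⟨c₀, mem_univ _, by nlinarith [hwlt c₀]⟩
    calc ∑ c, (w c) ^ 2 < ∑ c, (ε / 2) * w c := hlt
      _ = ε / 2 := by rw [← Finset.mul_sum, hwsum, mul_one]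
  have hscore : 1 - ε < modScore G P := by
    rw [modScore, Finset.sum_sub_distrib, hsum, hsum, ← hmdef]
    have h1 : (m - D.card) / m ≤ ∑ c, edgesInside G (fib G' c) / m := by
      rw [← Finset.sum_div]
      apply div_le_div_of_nonneg_right ?_ hm0.le
      simp only [edgesInside]
      rw [← Finset.sum_div]
      linarith [hinside]
    have h2 : ∑ c, ((degSum G (fib G' c) : ℝ) / (2 * m)) ^ 2 < ε / 2 := hsq
    have h4 : (D.card : ℝ) / m ≤ ε / 2 := by
      rw [div_le_iff₀ hm0]
      linarith [hcard]
    have h3 : 1 - ε / 2 ≤ (m - D.card) / m := by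
      rw [sub_div, div_self hm0.ne']
      linarith
    linarith
  have hbdd : BddAbove {x : ℝ | ∃ Q : Finpartition (univ : Finset V), x = modScore G Q} := by
    refine ⟨(Fintype.card (Finset V) : ℝ), ?_⟩
    rintro x ⟨Q, rfl⟩
    have hterm : ∀ A ∈ Q.parts, edgesInside G A / (numEdges G : ℝ)
        - ((degSum G A : ℝ) / (2 * (numEdges G : ℝ))) ^ 2 ≤ 1 := by
      intro A _
      have hle : ((A ×ˢ A).filter fun p => G.Adj p.1 p.2).card ≤ 2 * numEdges G := by
        calc ((A ×ˢ A).filter fun p => G.Adj p.1 p.2).card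
            ≤ ((univ ×ˢ univ : Finset (V × V)).filter fun p => G.Adj p.1 p.2).card :=
              Finset.card_le_card (Finset.filter_subset_filter _
                (fun p _ => mem_product.mpr ⟨mem_univ _, mem_univ _⟩))
          _ = 2 * numEdges G := by
              rw [card_filter_adj, SimpleGraph.sum_degrees_eq_twice_card_edges]; rfl
      have h1 : edgesInside G A ≤ (numEdges G : ℝ) := by
        rw [edgesInside, div_le_iff₀ (by norm_num : (0:ℝ) < 2)]
        calc (((A ×ˢ A).filter fun p => G.Adj p.1 p.2).card : ℝ)
            ≤ ((2 * numEdges G : ℕ) : ℝ) := by exact_mod_cast hle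
          _ = (numEdges G : ℝ) * 2 := by push_cast; ring
      have h2 : (0:ℝ) ≤ ((degSum G A : ℝ) / (2 * (numEdges G : ℝ))) ^ 2 := sq_nonneg _
      have h3 : edgesInside G A / (numEdges G : ℝ) ≤ 1 := by
        rw [div_le_one (by rw [← hmdef]; exact hm0)]
        exact h1
      linarith
    calc modScore G Q ≤ ∑ _A ∈ Q.parts, (1:ℝ) := Finset.sum_le_sum hterm
      _ = Q.parts.card := by simp
      _ ≤ (Fintype.card (Finset V) : ℝ) := by
          exact_mod_cast Finset.card_le_univ Q.parts
  have hle : modScore G P ≤ modularity G := le_csSup hbdd ⟨P, rfl⟩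
  linarith


end
end
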